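/- arXiv:1601.01001 — 5 statements merged into one kernel-verified Lean document; each statement's English description precedes it below -/
import Mathlib

section
/- If I_n is a lower ω-invariant of a loop, i.e. F(0) ⪰ I_0 and F(I_n) ⪰ I_{n+1} for all n, where F : T → T is a monotone ω-continuous map on the ω-cpo T of run-times, and the pointwise limit L = lim_{n→∞} I_n exists, then lfp F ⪰ L. -/
/-! A lower ω-invariant is dominated termwise by the Kleene iterates: `I n ≤ F^[n+1] 0`, by
induction using monotonicity of `F`. Hence every `I n` lies below `⨆ n, F^[n] 0`, and so does
their limit, since `≤` is closed in the product topology. -/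

theorem Monotone.le_iterate_succ_of_le_map {β : Type*} [Preorder β] {F : β → β}
    (hF : Monotone F) {I : ℕ → β} {x : β} (h0 : I 0 ≤ F x)
    (hstep : ∀ n, I (n + 1) ≤ F (I n)) : ∀ n, I n ≤ F^[n + 1] x
  | 0 => h0
  | n + 1 => calc
      I (n + 1) ≤ F (I n) := hstep n
      _ ≤ F (F^[n + 1] x) := hF (hF.le_iterate_succ_of_le_map h0 hstep n)
      _ = F^[n + 2] x := (Function.iterate_succ_apply' F (n + 1) x).symm

theorem lower_omega_invariant_bound_general {α : Type*}
    (F : (α → ENNReal) → (α → ENNReal))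
    (hmono : Monotone F)
    (I : ℕ → α → ENNReal)
    (h0 : I 0 ≤ F 0)
    (hstep : ∀ n, I (n + 1) ≤ F (I n))
    (L : α → ENNReal)
    (hlim : ∀ σ, Filter.Tendsto (fun n => I n σ) Filter.atTop (nhds (L σ))) :
    L ≤ ⨆ n, F^[n] 0 := by
  have hI : ∀ n, I n ≤ ⨆ m, F^[m] 0 := fun n =>
    (hmono.le_iterate_succ_of_le_map h0 hstep n).trans (le_iSup (fun m => F^[m] 0) (n + 1))
  exact le_of_tendsto' (tendsto_pi_nhds.2 hlim) hI

/-- lower ω-invariants give lower bounds on the least fixed point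
`lfp F = ⨆ n, F^[n] 0` of a monotone ω-continuous run-time transformer. -/
theorem lower_omega_invariant_bound {α : Type*}
    (F : (α → ENNReal) → (α → ENNReal))
    (hmono : Monotone F)
    (hcont : ∀ f : ℕ → α → ENNReal, Monotone f → F (⨆ n, f n) = ⨆ n, F (f n))
    (I : ℕ → α → ENNReal)
    (h0 : I 0 ≤ F 0)
    (hstep : ∀ n, I (n + 1) ≤ F (I n))
    (L : α → ENNReal)
    (hlim : ∀ σ, Filter.Tendsto (fun n => I n σ) Filter.atTop (nhds (L σ))) :
    L ≤ ⨆ n, F^[n] 0 :=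
  lower_omega_invariant_bound_general F hmono I h0 hstep L hlim
end

section
/- If I_n is an upper ω-invariant of a loop, i.e. F(0) ⪯ I_0 and F(I_n) ⪯ I_{n+1} for all n, where F : T → T is a monotone ω-continuous map on the ω-cpo T of run-times, and the pointwise limit L = lim_{n→∞} I_n exists, then lfp F ⪯ L. -/
/-!
The iterates `F^[n] ⊥` form an increasing chain, and by induction `F^[n + 1] ⊥ ≤ I n`. Each iterate
is therefore eventually below the invariant, hence below its limit, and so is their supremum.
-/

open Filter Topology

def IsUpperOmegaInvariant {α : Type*} [Preorder α] [OrderBot α] (F : α → α) (I : ℕ → α) : Prop :=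
  F ⊥ ≤ I 0 ∧ ∀ n, F (I n) ≤ I (n + 1)

theorem IsUpperOmegaInvariant.iterate_succ_bot_le {α : Type*} [Preorder α] [OrderBot α]
    {F : α → α} {I : ℕ → α} (hI : IsUpperOmegaInvariant F I) (hF : Monotone F) (n : ℕ) :
    F^[n + 1] ⊥ ≤ I n :=
  hF.seq_le_seq (x := fun k => F^[k + 1] ⊥) n hI.1
    (fun k _ => (Function.iterate_succ_apply' F (k + 1) ⊥).le) (fun k _ => hI.2 k)

theorem iSup_le_of_tendsto_of_le_succ {α : Type*} [CompleteLattice α] [TopologicalSpace α]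
    [ClosedIciTopology α] {a b : ℕ → α} {l : α} (ha : Monotone a) (hab : ∀ n, a (n + 1) ≤ b n)
    (hb : Tendsto b atTop (𝓝 l)) : ⨆ n, a n ≤ l :=
  iSup_le fun n => ge_of_tendsto hb <|
    (eventually_ge_atTop n).mono fun m hm => (ha (hm.trans m.le_succ)).trans (hab m)

theorem IsUpperOmegaInvariant.iSup_iterate_bot_le {α : Type*} [CompleteLattice α]
    [TopologicalSpace α] [ClosedIciTopology α] {F : α → α} {I : ℕ → α} {l : α}
    (hI : IsUpperOmegaInvariant F I) (hF : Monotone F) (hl : Tendsto I atTop (𝓝 l)) :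
    ⨆ n, F^[n] ⊥ ≤ l :=
  iSup_le_of_tendsto_of_le_succ (hF.monotone_iterate_of_le_map bot_le)
    (hI.iterate_succ_bot_le hF) hl

theorem upper_omega_invariant_bound_general {α : Type*}
    (F : (α → ENNReal) → (α → ENNReal))
    (hmono : Monotone F)
    (I : ℕ → α → ENNReal)
    (h0 : F 0 ≤ I 0)
    (hstep : ∀ n, F (I n) ≤ I (n + 1))
    (L : α → ENNReal)
    (hlim : ∀ σ, Filter.Tendsto (fun n => I n σ) Filter.atTop (nhds (L σ))) :
    (⨆ n, F^[n] 0) ≤ L :=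
  IsUpperOmegaInvariant.iSup_iterate_bot_le ⟨h0, hstep⟩ hmono (tendsto_pi_nhds.2 hlim)

/-- upper ω-invariants give upper bounds on the least fixed point
`lfp F = ⨆ n, F^[n] 0` of a monotone ω-continuous run-time transformer. -/
theorem upper_omega_invariant_bound {α : Type*}
    (F : (α → ENNReal) → (α → ENNReal))
    (hmono : Monotone F)
    (hcont : ∀ f : ℕ → α → ENNReal, Monotone f → F (⨆ n, f n) = ⨆ n, F (f n))
    (I : ℕ → α → ENNReal)
    (h0 : F 0 ≤ I 0)
    (hstep : ∀ n, F (I n) ≤ I (n + 1))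
    (L : α → ENNReal)
    (hlim : ∀ σ, Filter.Tendsto (fun n => I n σ) Filter.atTop (nhds (L σ))) :
    (⨆ n, F^[n] 0) ≤ L :=
  upper_omega_invariant_bound_general F hmono I h0 hstep L hlim
end

section
/- For the geometric loop functional F as above, the sequence I_n(c) = 1 + [c = 1]·(4 − 3/2^n) satisfies F(0) = I_0 and F(I_n) = I_{n+1} for all n; consequently lfp F(c) = 1 + [c = 1]·4 for all c. -/
/-- The characteristic functional of the geometric loop
`while (c = 1) { c :≈ ½⟨0⟩ + ½⟨1⟩ }` with respect to continuation 0. -/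
noncomputable def geoF (X : ℤ → ENNReal) : ℤ → ENNReal :=
  fun c => 1 + if c = 1 then 1 + (1 / 2) * X 0 + (1 / 2) * X 1 else 0

/-- The ω-invariant `I_n(c) = 1 + [c = 1]·(4 − 3/2^n)`. -/
noncomputable def geoI (n : ℕ) : ℤ → ENNReal :=
  fun c => 1 + if c = 1 then 4 - 3 / 2 ^ n else 0

/-! An exact ω-invariant `I` (with `F ⊥ = I 0` and `F (I n) = I (n + 1)`) is the Kleene chain
of `F` shifted by one, so the least fixed point `⨆ n, F^[n] ⊥` is `⨆ n, I n`. For the geometric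
loop the only nontrivial value is `I_n(1) = 1 + (4 - 3/2^n)`, whose supremum is `1 + 4` because
`⨅ n, 3/2^n = 0` and truncated subtraction in `ℝ≥0∞` turns this infimum into the supremum. -/

open ENNReal

theorem iSup_iterate_bot_eq_iSup {α : Type*} [CompleteLattice α] {F : α → α} {I : ℕ → α}
    (h_zero : F ⊥ = I 0) (h_succ : ∀ n, F (I n) = I (n + 1)) :
    ⨆ n, F^[n] ⊥ = ⨆ n, I n := by
  have h_iter : ∀ n, F^[n + 1] ⊥ = I n := by
    intro n
    induction n with
    | zero => exact h_zero
    | succ n ih => rw [Function.iterate_succ_apply', ih, h_succ]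
  rw [← sup_iSup_nat_succ, Function.iterate_zero_apply, bot_sup_eq]
  simp only [h_iter]

theorem ENNReal.iInf_div_two_pow {a : ℝ≥0∞} (ha : a ≠ ∞) : ⨅ n : ℕ, a / 2 ^ n = 0 := by
  have h_inv : ⨅ n : ℕ, ((2 : ℝ≥0∞) ^ n)⁻¹ = 0 := by
    simp_rw [ENNReal.inv_pow]
    exact iInf_eq_bot.mpr fun _ hb => exists_inv_two_pow_lt hb.ne'
  simp only [ENNReal.div_eq_inv_mul]
  rw [← ENNReal.iInf_mul fun h => absurd h ha, h_inv, zero_mul]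

theorem two_add_inv_two_mul_four_sub (n : ℕ) :
    2 + 2⁻¹ * (4 - 3 / 2 ^ n) = (4 - 3 / 2 ^ (n + 1) : ℝ≥0∞) := by
  refine ENNReal.eq_sub_of_add_eq (div_ne_top ofNat_ne_top (by simp)) ?_
  have h_half : 3 / 2 ^ (n + 1) = 2⁻¹ * (3 / 2 ^ n : ℝ≥0∞) := by
    rw [pow_succ, ENNReal.div_eq_inv_mul, ENNReal.div_eq_inv_mul,
      ENNReal.mul_inv (by simp) (by simp)]
    ring
  have h_le : 3 / 2 ^ n ≤ (4 : ℝ≥0∞) :=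
    calc 3 / 2 ^ n ≤ (3 : ℝ≥0∞) / 1 := ENNReal.div_le_div_left (one_le_pow₀ one_le_two) 3
      _ ≤ 4 := by norm_num
  rw [h_half, add_assoc, ← mul_add, tsub_add_cancel_of_le h_le,
    show (4 : ℝ≥0∞) = 2 * 2 by norm_num, ← mul_assoc,
    ENNReal.inv_mul_cancel two_ne_zero ofNat_ne_top, one_mul, two_mul]

theorem geoF_zero : geoF 0 = geoI 0 := by
  funext c
  by_cases hc : c = 1
  · simpa [geoF, geoI, hc] using (ENNReal.sub_eq_of_eq_add (by simp) (by norm_num)).symm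
  · simp [geoF, geoI, hc]

theorem geoF_geoI (n : ℕ) : geoF (geoI n) = geoI (n + 1) := by
  funext c
  by_cases hc : c = 1
  · simp only [geoF, geoI, hc, ↓reduceIte, zero_ne_one, add_zero, mul_one, one_div]
    rw [← two_add_inv_two_mul_four_sub, mul_add, mul_one, ← add_assoc (1 + 2⁻¹),
      add_assoc 1 2⁻¹, ENNReal.inv_two_add_inv_two, one_add_one_eq_two]
  · simp [geoF, geoI, hc]

theorem iSup_geoI_apply (c : ℤ) : (⨆ n, geoI n) c = 1 + if c = 1 then 4 else 0 := by
  rw [iSup_apply]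
  by_cases hc : c = 1
  · simp [geoI, hc, ← ENNReal.add_iSup, ← ENNReal.sub_iInf, ENNReal.iInf_div_two_pow]
  · simp [geoI, hc]

/-- the sequence `I_n` satisfies `F(0) = I_0` and
`F(I_n) = I_{n+1}`; consequently `lfp F (c) = 1 + [c = 1]·4`. -/
theorem geo_exact_runtime :
    geoF 0 = geoI 0 ∧ (∀ n, geoF (geoI n) = geoI (n + 1)) ∧
    ∀ c : ℤ, (⨆ n, geoF^[n] 0) c = 1 + if c = 1 then 4 else 0 := by
  refine ⟨geoF_zero, geoF_geoI, fun c => ?_⟩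
  rw [show (0 : ℤ → ℝ≥0∞) = ⊥ from rfl, iSup_iterate_bot_eq_iSup geoF_zero geoF_geoI,
    iSup_geoI_apply]
end

section
/- The coefficients a_{n,k} = 2^{−n}·(−C(n, ⌊(n−k)/2⌋) + 2·Σ_{i=0}^{n−k} 2^i·C(n−i, ⌊(n−i−k)/2⌋)) satisfy the recurrence a_{n+1,k} = ½·(a_{n,k−1} + a_{n,k+1}) for all 1 ≤ k ≤ n+1. -/
/-!
Write `d = n - k` and `b(m, x) = C(m, ⌊x/2⌋)`. Pascal's rule reads `b(m+1, x) = b(m, x) + b(m, x-2)`,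
and `2^n a_{n,k}` is a fixed linear combination of the values `b(n - i, d - i)`, `0 ≤ i ≤ n`.
Applying Pascal's rule termwise turns the combination for `(n+1, d)` into the sum of those for
`(n, d)` and `(n, d - 2)`, i.e. for `(n, k - 1)` and `(n, k + 1)`; the one term without a
counterpart is `b(0, -k)`, which vanishes because `k ≥ 1`.
-/

/-- Binomial coefficient `C(m, j)` with the convention `C(m, j) = 0` for `j < 0`. -/
def binomZ (m : ℕ) (j : ℤ) : ℚ :=
  if j < 0 then 0 else (m.choose j.toNat : ℚ)

/-- Random-walk coefficients
`a_{n,k} = 2^{−n}·(−C(n, ⌊(n−k)/2⌋) + 2·Σ_{i=0}^{n−k} 2^i·C(n−i, ⌊(n−i−k)/2⌋))`. -/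
def rwA (n k : ℕ) : ℚ :=
  (1 / 2 ^ n) * (-(binomZ n (((n : ℤ) - k).fdiv 2)) +
    2 * ∑ i ∈ Finset.range (n - k + 1),
      2 ^ i * binomZ (n - i) (((n : ℤ) - i - k).fdiv 2))

open Finset

lemma binomZ_of_neg (m : ℕ) {j : ℤ} (hj : j < 0) : binomZ m j = 0 := if_pos hj

lemma binomZ_succ (m : ℕ) (j : ℤ) : binomZ (m + 1) j = binomZ m j + binomZ m (j - 1) := by
  unfold binomZ
  rcases lt_trichotomy j 0 with hj | rfl | hj
  · simp [hj, show j - 1 < 0 by omega]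
  · simp
  · rw [if_neg (by omega), if_neg (by omega), if_neg (by omega),
      show j.toNat = (j - 1).toNat + 1 by omega, Nat.choose_succ_succ]
    push_cast
    ring

lemma binomZ_fdiv_two_of_neg (m : ℕ) {x : ℤ} (hx : x < 0) : binomZ m (x.fdiv 2) = 0 :=
  binomZ_of_neg m (by rw [Int.fdiv_eq_ediv_of_nonneg _ zero_le_two]; omega)

lemma binomZ_fdiv_two_succ (m : ℕ) (x : ℤ) :
    binomZ (m + 1) (x.fdiv 2) = binomZ m (x.fdiv 2) + binomZ m ((x - 2).fdiv 2) := by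
  rw [binomZ_succ, show (x - 2).fdiv 2 = x.fdiv 2 - 1 by
    simp only [Int.fdiv_eq_ediv_of_nonneg _ zero_le_two]; omega]

/-- `2^n a_{n,k}` as a function of `n` and `d = n - k`. -/
def walkSum (n : ℕ) (d : ℤ) : ℚ :=
  -binomZ n (d.fdiv 2) + 2 * ∑ i ∈ range (n + 1), 2 ^ i * binomZ (n - i) ((d - i).fdiv 2)

lemma rwA_eq_walkSum (n k : ℕ) : rwA n k = walkSum n (n - k) / 2 ^ n := by
  rw [rwA, walkSum, one_div, div_eq_inv_mul]
  congr 3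
  calc _ = ∑ i ∈ range (n + 1), (2 : ℚ) ^ i * binomZ (n - i) (((n : ℤ) - i - k).fdiv 2) := by
        refine sum_subset (range_subset_range.mpr (by omega)) fun i hi hi' => ?_
        rw [mem_range] at hi hi'
        rw [binomZ_fdiv_two_of_neg _ (by omega), mul_zero]
    _ = _ := sum_congr rfl fun i _ => by rw [sub_right_comm]

lemma walkSum_succ (n : ℕ) {d : ℤ} (hd : d ≤ n) :
    walkSum (n + 1) d = walkSum n d + walkSum n (d - 2) := by
  have hlast : binomZ (n + 1 - (n + 1)) ((d - (n + 1 : ℕ)).fdiv 2) = 0 :=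
    binomZ_fdiv_two_of_neg _ (by omega)
  have hterm : ∀ i ∈ range (n + 1), (2 : ℚ) ^ i * binomZ (n + 1 - i) ((d - i).fdiv 2) =
      2 ^ i * binomZ (n - i) ((d - i).fdiv 2) + 2 ^ i * binomZ (n - i) ((d - 2 - i).fdiv 2) := by
    intro i hi
    rw [mem_range] at hi
    rw [show n + 1 - i = n - i + 1 by omega, binomZ_fdiv_two_succ, sub_right_comm d 2, mul_add]
  rw [walkSum, sum_range_succ, hlast, mul_zero, add_zero, sum_congr rfl hterm, sum_add_distrib,
    binomZ_fdiv_two_succ, walkSum, walkSum]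
  ring

theorem rwA_recurrence_general (n k : ℕ) (h1 : 1 ≤ k) :
    rwA (n + 1) k = (1 / 2) * (rwA n (k - 1) + rwA n (k + 1)) := by
  have hd : ((n + 1 : ℕ) : ℤ) - k ≤ n := by omega
  rw [rwA_eq_walkSum, rwA_eq_walkSum, rwA_eq_walkSum, walkSum_succ n hd,
    show (n : ℤ) - (k - 1 : ℕ) = (n + 1 : ℕ) - k by omega,
    show (n : ℤ) - (k + 1 : ℕ) = (n + 1 : ℕ) - k - 2 by omega]
  field_simp
  ring

/-- `a_{n+1,k} = ½·(a_{n,k−1} + a_{n,k+1})` for `1 ≤ k ≤ n+1`. -/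
theorem rwA_recurrence (n k : ℕ) (h1 : 1 ≤ k) (h2 : k ≤ n + 1) :
    rwA (n + 1) k = (1 / 2) * (rwA n (k - 1) + rwA n (k + 1)) :=
  rwA_recurrence_general n k h1
end

section
/- For all n ≥ 2, the random-walk coefficient satisfies a_{n,0} ≥ 1 + H_{⌊n/2⌋}, where H_m = Σ_{k=1}^m 1/k is the m-th harmonic number; consequently lim_{n→∞} a_{n,0} = ∞. -/
/-- The `m`-th harmonic number `H_m = Σ_{k=1}^m 1/k`. -/
def harmonic' (m : ℕ) : ℚ := ∑ k ∈ Finset.range m, 1 / (k + 1 : ℚ)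

/-!
Reversing the summation index gives `a_{n,0} = -r_n + 2 Σ_{m ≤ n} r_m` with
`r_m = C(m, ⌊m/2⌋) / 2^m`. Since `r_0 = 1`, `r_n ≤ 1` and `r_{2j} ≥ 1/(2j)` for `j ≥ 1`,
keeping only the even terms of the sum yields `a_{n,0} ≥ -1 + 2 + H_{⌊n/2⌋}`.
-/

open Finset Filter

def centralChooseRatio (m : ℕ) : ℚ := (m.choose (m / 2) : ℚ) / 2 ^ m

lemma binomZ_natCast_fdiv_two (m : ℕ) : binomZ m ((m : ℤ).fdiv 2) = m.choose (m / 2) := by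
  have hfdiv : (m : ℤ).fdiv 2 = ((m / 2 : ℕ) : ℤ) := by
    exact_mod_cast (Int.ofNat_fdiv m 2).symm
  rw [binomZ, hfdiv, if_neg (Int.natCast_nonneg _).not_gt, Int.toNat_natCast]

lemma centralChooseRatio_nonneg (m : ℕ) : 0 ≤ centralChooseRatio m := by
  unfold centralChooseRatio; positivity

lemma centralChooseRatio_le_one (m : ℕ) : centralChooseRatio m ≤ 1 := by
  rw [centralChooseRatio, div_le_one (by positivity)]
  exact_mod_cast Nat.choose_le_two_pow m (m / 2)

lemma centralChooseRatio_zero : centralChooseRatio 0 = 1 := by simp [centralChooseRatio]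

lemma inv_le_two_mul_centralChooseRatio_two_mul {j : ℕ} (hj : 1 ≤ j) :
    (j : ℚ)⁻¹ ≤ 2 * centralChooseRatio (2 * j) := by
  have hbound : (4 : ℚ) ^ j ≤ 2 * j * j.centralBinom := by
    exact_mod_cast Nat.four_pow_le_two_mul_self_mul_centralBinom j hj
  have hratio : centralChooseRatio (2 * j) = j.centralBinom / 4 ^ j := by
    rw [centralChooseRatio, Nat.mul_div_cancel_left j two_pos,
      ← Nat.centralBinom_eq_two_mul_choose, pow_mul]
    norm_num
  have hjpos : (0 : ℚ) < j := by exact_mod_cast hj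
  rw [hratio, inv_le_iff_one_le_mul₀ hjpos, show 2 * (j.centralBinom / 4 ^ j : ℚ) * j =
    2 * j * j.centralBinom / 4 ^ j by ring, le_div_iff₀ (by positivity)]
  linarith

lemma rwA_zero_eq (n : ℕ) :
    rwA n 0 = -centralChooseRatio n + 2 * ∑ m ∈ range (n + 1), centralChooseRatio m := by
  have hterm : ∀ i ∈ range (n + 1),
      (1 / 2 ^ n : ℚ) * (2 ^ i * binomZ (n - i) (((n : ℤ) - i - (0 : ℕ)).fdiv 2)) =
        centralChooseRatio (n - i) := by
    intro i hi
    have hin : i ≤ n := Nat.lt_succ_iff.mp (mem_range.mp hi)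
    rw [Nat.cast_zero, sub_zero, ← Nat.cast_sub hin, binomZ_natCast_fdiv_two,
      centralChooseRatio, pow_sub₀ _ two_ne_zero hin]
    field_simp
  rw [rwA, Nat.sub_zero, mul_add, mul_left_comm, mul_sum, sum_congr rfl hterm,
    ← sum_range_reflect centralChooseRatio (n + 1)]
  simp [binomZ_natCast_fdiv_two, centralChooseRatio, div_eq_inv_mul]

lemma sum_range_two_mul_le_sum_range {M : Type*} [AddCommMonoid M] [PartialOrder M]
    [IsOrderedAddMonoid M] {f : ℕ → M} (hf : ∀ m, 0 ≤ f m) (n : ℕ) :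
    ∑ j ∈ range (n / 2 + 1), f (2 * j) ≤ ∑ m ∈ range (n + 1), f m := by
  rw [← sum_image (g := (2 * ·)) fun a _ b _ hab => by simpa using hab]
  refine sum_le_sum_of_subset_of_nonneg ?_ fun m _ _ => hf m
  intro m hm
  simp only [mem_image, mem_range] at hm ⊢
  omega

lemma harmonic'_le_two_mul_sum_centralChooseRatio (k : ℕ) :
    harmonic' k ≤ 2 * ∑ j ∈ range k, centralChooseRatio (2 * (j + 1)) := by
  rw [harmonic', mul_sum]
  gcongr with j
  simpa [one_div] using inv_le_two_mul_centralChooseRatio_two_mul (Nat.le_add_left 1 j)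

lemma one_add_harmonic'_le_rwA (n : ℕ) : 1 + harmonic' (n / 2) ≤ rwA n 0 := by
  have heven := sum_range_two_mul_le_sum_range centralChooseRatio_nonneg n
  rw [sum_range_succ', mul_zero, centralChooseRatio_zero] at heven
  rw [rwA_zero_eq]
  linarith [centralChooseRatio_le_one n, harmonic'_le_two_mul_sum_centralChooseRatio (n / 2)]

lemma tendsto_harmonic'_atTop : Tendsto harmonic' atTop atTop := by
  refine tendsto_atTop.2 fun b => ?_
  filter_upwards [tendsto_atTop.1 Real.tendsto_sum_range_one_div_nat_succ_atTop b] with n hn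
  exact_mod_cast (show (b : ℝ) ≤ harmonic' n by simpa [harmonic'] using hn)

/-- `a_{n,0} ≥ 1 + H_{⌊n/2⌋}` for `n ≥ 2`, and hence
`a_{n,0} → ∞`. -/
theorem rwA_diverges :
    (∀ n : ℕ, 2 ≤ n → 1 + harmonic' (n / 2) ≤ rwA n 0) ∧
    Filter.Tendsto (fun n => rwA n 0) Filter.atTop Filter.atTop := by
  refine ⟨fun n _ => one_add_harmonic'_le_rwA n, ?_⟩
  refine tendsto_atTop_mono one_add_harmonic'_le_rwA (tendsto_atTop_add_const_left _ 1 ?_)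
  exact tendsto_harmonic'_atTop.comp (Nat.tendsto_div_const_atTop two_ne_zero)
end
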